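/- Let P be a normal logic program and let T, F be disjoint sets of atoms. Define simp(P,T,F) by removing all clauses with head in T ∪ F, all clauses with a positive body atom in F, all clauses containing not(a) for some a ∈ T, and deleting from remaining bodies all positive atoms in T and negative literals not(a) with a ∈ F. If M is a stable model of P with T ⊆ M and M ∩ F = ∅, then M \ T is a stable model of simp(P,T,F). -/
import Mathlib


/-- A normal program clause: head ← pos, not(neg). -/
structure Clause where
  head : ℕ
  pos : Finset ℕ
  neg : Finset ℕ
deriving DecidableEq

/-- N is closed under (is a model of) the Gelfond–Lifschitz reduct of P with respect to M. -/
def ReductClosed (P : Finset Clause) (M N : Set ℕ) : Prop :=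
  ∀ c ∈ P, (∀ a ∈ c.neg, a ∉ M) → (↑c.pos : Set ℕ) ⊆ N → c.head ∈ N

/-- M is a stable model of P: M is the least model of the reduct P^M. -/
def IsStableModel (P : Finset Clause) (M : Set ℕ) : Prop :=
  ReductClosed P M M ∧ ∀ N : Set ℕ, ReductClosed P M N → M ⊆ N

/-- The simplification simp(P,T,F) of a program P with respect to disjoint sets
of atoms T (true) and F (false). -/
def simpP (P : Finset Clause) (T F : Finset ℕ) : Finset Clause :=
  (P.filter (fun c => c.head ∉ T ∪ F ∧ c.pos ∩ F = ∅ ∧ c.neg ∩ T = ∅)).image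
    (fun c => ⟨c.head, c.pos \ T, c.neg \ F⟩)

/-- If M is a stable model of P with T ⊆ M and M ∩ F = ∅, then M \ T is a stable
model of simp(P,T,F). -/
theorem simp_stable (P : Finset Clause) (T F : Finset ℕ) (hTF : Disjoint T F)
    (M : Set ℕ) (hM : IsStableModel P M) (hT : ↑T ⊆ M) (hF : M ∩ ↑F = ∅) :
    IsStableModel (simpP P T F) (M \ ↑T) := by
  obtain ⟨hMc, hMmin⟩ := hM
  have hMF : ∀ a : ℕ, a ∈ F → a ∉ M := by
    intro a haF haM
    have : a ∈ M ∩ ↑F := ⟨haM, haF⟩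
    rw [hF] at this; exact this
  constructor
  · -- closedness
    rintro c' hc' hneg hpos
    simp only [simpP, Finset.mem_image, Finset.mem_filter] at hc'
    obtain ⟨c, ⟨hcP, hhead, hposF, hnegT⟩, rfl⟩ := hc'
    simp only at hneg hpos ⊢
    have hheadM : c.head ∈ M := by
      apply hMc c hcP
      · intro a ha haM
        by_cases haF : a ∈ F
        · exact hMF a haF haM
        · have haT : a ∉ T := by
            intro h
            have : a ∈ c.neg ∩ T := Finset.mem_inter.mpr ⟨ha, h⟩
            rw [hnegT] at this; exact absurd this (Finset.notMem_empty a)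
          exact hneg a (Finset.mem_sdiff.mpr ⟨ha, haF⟩) ⟨haM, haT⟩
      · intro a ha
        by_cases haT : a ∈ T
        · exact hT haT
        · exact (hpos (by exact_mod_cast Finset.mem_sdiff.mpr ⟨ha, haT⟩)).1
    refine ⟨hheadM, fun h => hhead (Finset.mem_union_left _ h)⟩
  · -- minimality
    intro N hN
    intro x hx
    set N' : Set ℕ := (N ∩ M) ∪ ↑T with hN'def
    have hMN' : M ⊆ N' := by
      apply hMmin
      intro c hcP hneg hpos
      by_cases hhT : c.head ∈ T
      · exact Or.inr hhT
      have hposM : (↑c.pos : Set ℕ) ⊆ M := by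
        intro a ha
        rcases hpos ha with ⟨_, haM⟩ | haT
        · exact haM
        · exact hT haT
      have hheadM : c.head ∈ M := hMc c hcP hneg hposM
      have hhF : c.head ∉ F := fun h => hMF _ h hheadM
      have hposF : c.pos ∩ F = ∅ := by
        rw [Finset.eq_empty_iff_forall_notMem]
        intro a ha
        rcases Finset.mem_inter.mp ha with ⟨h1, h2⟩
        exact hMF a h2 (hposM h1)
      have hnegT : c.neg ∩ T = ∅ := by
        rw [Finset.eq_empty_iff_forall_notMem]
        intro a ha
        rcases Finset.mem_inter.mp ha with ⟨h1, h2⟩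
        exact hneg a h1 (hT h2)
      have hc' : (⟨c.head, c.pos \ T, c.neg \ F⟩ : Clause) ∈ simpP P T F := by
        simp only [simpP, Finset.mem_image, Finset.mem_filter]
        exact ⟨c, ⟨hcP, fun h => (Finset.mem_union.mp h).elim hhT hhF, hposF, hnegT⟩, rfl⟩
      have hheadN : c.head ∈ N := by
        apply hN _ hc'
        · intro a ha hMT
          exact hneg a (Finset.mem_sdiff.mp ha).1 hMT.1
        · intro a ha
          have ha' : a ∈ c.pos \ T := by exact_mod_cast ha
          rcases Finset.mem_sdiff.mp ha' with ⟨h1, h2⟩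
          rcases hpos (by exact_mod_cast h1) with ⟨hN1, _⟩ | hT1
          · exact hN1
          · exact absurd hT1 h2
      exact Or.inl ⟨hheadN, hheadM⟩
    rcases hMN' hx.1 with ⟨hN1, _⟩ | hT1
    · exact hN1
    · exact absurd hT1 hx.2
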